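/- arXiv:1911.11133 — 2 statements merged into one kernel-verified Lean document; each statement's English description precedes it below -/
import Mathlib

section
/- Let {α_n}_{n≥1} be a family of Dirichlet convolution polynomials. Then for every n ≥ 2 and all x, y ∈ ℂ with y ≠ 0, α_n(x) = ∑_{k=1}^{Ω(n)} C(x/y, k) · ∑_{n=d_1 d_2 ⋯ d_k, each d_i ≥ 2} α_{d_1}(y) α_{d_2}(y) ⋯ α_{d_k}(y), where the inner sum is over all ordered k-tuples (d_1,…,d_k) of integers d_i ≥ 2 with product n, and C(z,k) = z(z−1)⋯(z−k+1)/k! is the generalized binomial coefficient. -/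
/-- A family of Dirichlet convolution polynomials: `α 1` is the constant polynomial `1`
and for all `n ≥ 1` and all complex `x, y`,
`α n (x+y) = ∑_{d ∣ n} α d (x) · α (n/d) (y)`. -/
def IsDirichletConvPolyFamily (α : ℕ → Polynomial ℂ) : Prop :=
  α 1 = 1 ∧ ∀ n : ℕ, 1 ≤ n → ∀ x y : ℂ,
    (α n).eval (x + y) = ∑ d ∈ n.divisors, (α d).eval x * (α (n / d)).eval y

/-- Generalized binomial coefficient `C(z,k) = z(z-1)⋯(z-k+1)/k!`. -/
noncomputable def genBinom (z : ℂ) (k : ℕ) : ℂ :=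
  (∏ i ∈ Finset.range k, (z - (i : ℂ))) / (Nat.factorial k : ℂ)

/-- Sum over all ordered `k`-tuples `(d₁,…,d_k)` of integers `dᵢ ≥ 2` with product `n`
of the products `a d₁ ⋯ a d_k`. -/
noncomputable def tupleProdSum (a : ℕ → ℂ) (n k : ℕ) : ℂ :=
  ∑ d ∈ (Fintype.piFinset fun _ : Fin k => Finset.range (n + 1)).filter
      (fun d => (∀ i, 2 ≤ d i) ∧ ∏ i, d i = n), ∏ i, a (d i)

noncomputable def Saux (a : ℕ → ℂ) : ℕ → ℕ → ℂ
  | 0, n => if n = 1 then 1 else 0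
  | (k+1), n => ∑ d ∈ n.divisors.filter (2 ≤ ·), a d * Saux a k (n / d)

lemma tps_zero (a : ℕ → ℂ) (n : ℕ) : tupleProdSum a n 0 = if n = 1 then 1 else 0 := by
  unfold tupleProdSum
  split_ifs with h
  · subst h
    rw [Finset.sum_eq_single (fun i : Fin 0 => i.elim0)]
    · simp
    · intro b hb hne
      exact absurd (funext fun i => i.elim0) hne
    · intro hb
      exfalso
      apply hb
      simp [Finset.mem_filter, Fintype.mem_piFinset]
      exact funext fun i => i.elim0
  · rw [Finset.sum_eq_zero]
    intro d hd
    simp only [Finset.mem_filter] at hd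
    exact absurd ((by simpa using hd.2.2 : (1:ℕ) = n)).symm h

lemma tps_succ (a : ℕ → ℂ) (n k : ℕ) (hn : 1 ≤ n) :
    tupleProdSum a n (k+1) = ∑ d ∈ n.divisors.filter (2 ≤ ·), a d * tupleProdSum a (n/d) k := by
  unfold tupleProdSum
  simp_rw [Finset.mul_sum]
  rw [Finset.sum_sigma']
  refine Finset.sum_nbij' (fun f => ⟨f 0, Fin.tail f⟩)
    (fun p => Fin.cons p.1 p.2) ?_ ?_ ?_ ?_ ?_
  · rintro f hf
    simp only [Finset.mem_filter, Fintype.mem_piFinset, Finset.mem_range] at hf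
    obtain ⟨hmem, h2, hprod⟩ := hf
    have hprod' : f 0 * ∏ i : Fin k, Fin.tail f i = n := by
      rw [← hprod, Fin.prod_univ_succ]; rfl
    have hf0 : f 0 ∣ n := ⟨_, hprod'.symm⟩
    have hpos : 0 < f 0 := by have := h2 0; omega
    have htail : (∏ i : Fin k, Fin.tail f i) = n / f 0 :=
      (Nat.div_eq_of_eq_mul_right hpos hprod'.symm).symm
    have hPpos : 0 < n / f 0 := Nat.div_pos (Nat.le_of_dvd (by omega) hf0) hpos
    simp only [Finset.mem_sigma, Finset.mem_filter, Nat.mem_divisors, Fintype.mem_piFinset,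
      Finset.mem_range]
    refine ⟨⟨⟨hf0, by omega⟩, h2 0⟩, ?_, fun i => h2 i.succ, htail⟩
    intro i
    have hdvd : Fin.tail f i ∣ ∏ j : Fin k, Fin.tail f j :=
      Finset.dvd_prod_of_mem _ (Finset.mem_univ i)
    rw [htail] at hdvd
    have := Nat.le_of_dvd hPpos hdvd
    omega
  · rintro ⟨d, g⟩ hp
    simp only [Finset.mem_sigma, Finset.mem_filter, Nat.mem_divisors, Fintype.mem_piFinset,
      Finset.mem_range] at hp
    obtain ⟨⟨⟨hdvd, hn0⟩, hd2⟩, hgmem, hg2, hgprod⟩ := hp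
    simp only [Finset.mem_filter, Fintype.mem_piFinset, Finset.mem_range]
    have hdle : d ≤ n := Nat.le_of_dvd (by omega) hdvd
    have hql : n / d ≤ n := Nat.div_le_self n d
    refine ⟨?_, ?_, ?_⟩
    · intro i
      refine Fin.cases ?_ ?_ i
      · simpa using by omega
      · intro j
        simp only [Fin.cons_succ]
        have := hgmem j
        omega
    · intro i
      refine Fin.cases ?_ ?_ i
      · simpa using hd2
      · intro j
        simpa using hg2 j
    · rw [Fin.prod_univ_succ]
      simp only [Fin.cons_zero, Fin.cons_succ]
      rw [hgprod]
      exact Nat.mul_div_cancel' hdvd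
  · intro f _
    exact Fin.cons_self_tail f
  · rintro ⟨d, g⟩ _
    simp [Fin.tail_cons]
  · intro f _
    rw [Fin.prod_univ_succ]
    rfl

open ArithmeticFunction ArithmeticFunction.Omega in
lemma cardFactors_pos' {d : ℕ} (hd : 2 ≤ d) : 1 ≤ Ω d := by
  rw [cardFactors_apply]
  rcases List.eq_nil_or_concat d.primeFactorsList with h | ⟨l, b, h⟩
  · rcases (Nat.primeFactorsList_eq_nil d).mp h with h | h <;> omega
  · simp [h]

open ArithmeticFunction ArithmeticFunction.Omega in
lemma cardFactors_div_lt {n d : ℕ} (hn : 1 ≤ n) (hd : 2 ≤ d) (hdvd : d ∣ n) :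
    Ω (n / d) < Ω n ∧ 1 ≤ n / d := by
  have h1 : 1 ≤ n / d := Nat.div_pos (Nat.le_of_dvd (by omega) hdvd) (by omega)
  have : Ω n = Ω d + Ω (n / d) := by
    conv_lhs => rw [← Nat.mul_div_cancel' hdvd]
    exact cardFactors_mul (by omega) (by omega)
  have := cardFactors_pos' hd
  omega

lemma tps_eq_Saux (a : ℕ → ℂ) (k : ℕ) : ∀ n, 1 ≤ n → tupleProdSum a n k = Saux a k n := by
  induction k with
  | zero => intro n hn; rw [tps_zero]; rfl
  | succ k ih =>
    intro n hn
    rw [tps_succ a n k hn, Saux]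
    refine Finset.sum_congr rfl fun d hd => ?_
    simp only [Finset.mem_filter, Nat.mem_divisors] at hd
    rw [ih _ (Nat.div_pos (Nat.le_of_dvd (by omega) hd.1.1) (by omega))]

open ArithmeticFunction ArithmeticFunction.Omega in
lemma Saux_eq_zero (a : ℕ → ℂ) (k : ℕ) : ∀ n, 1 ≤ n → Ω n < k → Saux a k n = 0 := by
  induction k with
  | zero => intro n hn h; omega
  | succ k ih =>
    intro n hn h
    rw [Saux]
    refine Finset.sum_eq_zero fun d hd => ?_
    simp only [Finset.mem_filter, Nat.mem_divisors] at hd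
    obtain ⟨hlt, h1⟩ := cardFactors_div_lt hn hd.2 hd.1.1
    rw [ih _ h1 (by omega), mul_zero]

lemma divisors_erase_one {n : ℕ} (hn : 1 ≤ n) :
    n.divisors.erase 1 = n.divisors.filter (2 ≤ ·) := by
  ext d
  simp only [Finset.mem_erase, Finset.mem_filter, Nat.mem_divisors]
  constructor
  · rintro ⟨h1, hd, hn0⟩
    have : d ≠ 0 := fun h => hn0 (by simpa [h] using hd)
    exact ⟨⟨hd, hn0⟩, by omega⟩
  · rintro ⟨⟨hd, hn0⟩, h2⟩
    exact ⟨by omega, hd, hn0⟩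

lemma eval_zero_eq_zero (α : ℕ → Polynomial ℂ) (hα : IsDirichletConvPolyFamily α) :
    ∀ n, 2 ≤ n → (α n).eval 0 = 0 := by
  intro n
  induction n using Nat.strong_induction_on with
  | _ n ih =>
  intro hn
  have heq := hα.2 n (by omega) 0 0
  rw [add_zero] at heq
  set f : ℕ → ℂ := fun d => (α d).eval 0 * (α (n / d)).eval 0 with hf
  have h1n : (1:ℕ) ≠ n := by omega
  have h1mem : 1 ∈ n.divisors := Nat.one_mem_divisors.mpr (by omega)
  have hnmem : n ∈ n.divisors.erase 1 :=
    Finset.mem_erase.mpr ⟨h1n.symm, Nat.mem_divisors_self n (by omega)⟩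
  rw [← Finset.add_sum_erase _ f h1mem, ← Finset.add_sum_erase _ f hnmem] at heq
  have hone : (α 1).eval 0 = 1 := by rw [hα.1]; simp
  have hrest : ∑ d ∈ (n.divisors.erase 1).erase n, f d = 0 := by
    refine Finset.sum_eq_zero fun d hd => ?_
    simp only [Finset.mem_erase, Nat.mem_divisors] at hd
    obtain ⟨hdn, hd1, hdvd, hn0⟩ := hd
    have hd0 : d ≠ 0 := fun h => hn0 (by simpa [h] using hdvd)
    have hdle : d ≤ n := Nat.le_of_dvd (by omega) hdvd
    have : (α d).eval 0 = 0 := ih d (by omega) (by omega)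
    simp [hf, this]
  rw [hrest] at heq
  simp only [hf, hone, one_mul, Nat.div_self (by omega : 0 < n), Nat.div_one, mul_one,
    add_zero] at heq
  exact right_eq_add.mp heq

open ArithmeticFunction ArithmeticFunction.Omega in
lemma key_ind (α : ℕ → Polynomial ℂ) (hα : IsDirichletConvPolyFamily α) (y : ℂ) :
    ∀ m : ℕ, ∀ n, 1 ≤ n → (α n).eval ((m : ℂ) * y) =
      ∑ k ∈ Finset.range (Ω n + 1),
        (m.choose k : ℂ) * Saux (fun d => (α d).eval y) k n := by
  set a : ℕ → ℂ := fun d => (α d).eval y with ha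
  intro m
  induction m with
  | zero =>
    intro n hn
    rcases eq_or_lt_of_le hn with h | h
    · subst h
      simp [hα.1, Saux]
    · rw [Nat.cast_zero, zero_mul, eval_zero_eq_zero α hα n h]
      symm
      have hne : n ≠ 1 := by omega
      refine Finset.sum_eq_zero fun k hk => ?_
      match k with
      | 0 => simp [Saux, hne]
      | (j+1) => simp
  | succ m ih =>
    intro n hn
    rcases eq_or_lt_of_le hn with h | h
    · subst h
      simp [hα.1, Saux]
    have hn2 : 2 ≤ n := h
    have heq := hα.2 n (by omega) y ((m:ℂ) * y)
    have hcast : ((m+1 : ℕ) : ℂ) * y = y + (m:ℂ)*y := by push_cast; ring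
    rw [hcast, heq]
    have h1mem : 1 ∈ n.divisors := Nat.one_mem_divisors.mpr (by omega)
    rw [← Finset.add_sum_erase _ _ h1mem, divisors_erase_one (by omega)]
    have h1 : (α 1).eval y * (α (n / 1)).eval ((m:ℂ)*y) = (α n).eval ((m:ℂ)*y) := by
      rw [hα.1]; simp
    rw [h1, ih n hn]
    have hne : n ≠ 1 := by omega
    have h0 : Saux a 0 n = 0 := by simp [Saux, hne]
    have hstep : ∑ d ∈ n.divisors.filter (2 ≤ ·), (α d).eval y * (α (n / d)).eval ((m:ℂ)*y)
        = ∑ k ∈ Finset.range (Ω n + 1), (m.choose k : ℂ) * Saux a (k+1) n := by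
      have hd' : ∀ d ∈ n.divisors.filter (2 ≤ ·),
          (α (n/d)).eval ((m:ℂ)*y)
            = ∑ k ∈ Finset.range (Ω n + 1), (m.choose k : ℂ) * Saux a k (n/d) := by
        intro d hd
        simp only [Finset.mem_filter, Nat.mem_divisors] at hd
        obtain ⟨hlt, h1d⟩ := cardFactors_div_lt (by omega) hd.2 hd.1.1
        rw [ih _ h1d]
        refine Finset.sum_subset (Finset.range_subset_range.mpr (by omega)) ?_
        intro k hk hk2
        simp only [Finset.mem_range] at hk hk2
        rw [Saux_eq_zero a k _ h1d (by omega), mul_zero]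
      rw [Finset.sum_congr rfl (fun d hd => by rw [hd' d hd])]
      simp_rw [Finset.mul_sum]
      rw [Finset.sum_comm]
      refine Finset.sum_congr rfl fun k hk => ?_
      rw [Saux, Finset.mul_sum]
      refine Finset.sum_congr rfl fun d hd => ?_
      ring
    rw [hstep]
    have hT2 : ∑ k ∈ Finset.range (Ω n + 1), (m.choose k : ℂ) * Saux a (k+1) n
        = ∑ k ∈ Finset.range (Ω n + 1), (m.choose (k-1) : ℂ) * Saux a k n := by
      have hNN : Saux a (Ω n + 1) n = 0 := Saux_eq_zero a _ n (by omega) (by omega)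
      calc ∑ k ∈ Finset.range (Ω n + 1), (m.choose k : ℂ) * Saux a (k+1) n
          = ∑ k ∈ Finset.range (Ω n + 1), (m.choose ((k+1)-1) : ℂ) * Saux a (k+1) n := by
            simp
        _ = ∑ k ∈ Finset.range (Ω n + 1 + 1), (m.choose (k-1):ℂ) * Saux a k n := by
            rw [Finset.sum_range_succ' (fun k => (m.choose (k-1) : ℂ) * Saux a k n)]
            simp [h0]
        _ = ∑ k ∈ Finset.range (Ω n + 1), (m.choose (k-1):ℂ) * Saux a k n := by
            rw [Finset.sum_range_succ]
            simp [hNN]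
    rw [hT2, ← Finset.sum_add_distrib]
    refine Finset.sum_congr rfl fun k hk => ?_
    match k with
    | 0 => simp [h0]
    | (j+1) =>
      rw [← add_mul]
      congr 1
      rw [Nat.choose_succ_succ]
      push_cast
      ring

lemma prod_range_cast_sub (m k : ℕ) :
    ∏ i ∈ Finset.range k, ((m:ℂ) - i) = (m.descFactorial k : ℂ) := by
  induction k with
  | zero => simp
  | succ k ih =>
    rw [Finset.prod_range_succ, ih, Nat.descFactorial_succ]
    rcases le_or_gt k m with h | h
    · push_cast [h]
      ring
    · rw [Nat.descFactorial_eq_zero_iff_lt.mpr h]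
      simp

lemma genBinom_nat (m k : ℕ) : genBinom (m:ℂ) k = (m.choose k : ℂ) := by
  unfold genBinom
  rw [prod_range_cast_sub, Nat.descFactorial_eq_factorial_mul_choose]
  push_cast
  rw [mul_comm, mul_div_assoc, div_self (by exact_mod_cast k.factorial_ne_zero), mul_one]

open ArithmeticFunction ArithmeticFunction.Omega in
theorem stmt_2' (α : ℕ → Polynomial ℂ) (hα : IsDirichletConvPolyFamily α)
    (n : ℕ) (hn : 2 ≤ n) (x y : ℂ) (hy : y ≠ 0) :
    (α n).eval x = ∑ k ∈ Finset.Icc 1 (ArithmeticFunction.cardFactors n),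
      genBinom (x / y) k * tupleProdSum (fun d => (α d).eval y) n k := by
  set a : ℕ → ℂ := fun d => (α d).eval y with ha
  set N := Ω n with hN
  set Q : Polynomial ℂ := (α n).comp (Polynomial.C y * Polynomial.X) with hQdef
  set R : Polynomial ℂ := ∑ k ∈ Finset.Icc 1 N,
    Polynomial.C (Saux a k n / (k.factorial : ℂ)) *
      ∏ i ∈ Finset.range k, (Polynomial.X - Polynomial.C (i:ℂ)) with hRdef
  have hQ : ∀ z : ℂ, Q.eval z = (α n).eval (y * z) := by
    intro z; simp [hQdef, Polynomial.eval_comp]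
  have hR : ∀ z : ℂ, R.eval z = ∑ k ∈ Finset.Icc 1 N, genBinom z k * Saux a k n := by
    intro z
    rw [hRdef, Polynomial.eval_finset_sum]
    refine Finset.sum_congr rfl fun k hk => ?_
    simp only [Polynomial.eval_mul, Polynomial.eval_C, Polynomial.eval_prod,
      Polynomial.eval_sub, Polynomial.eval_X, genBinom]
    ring
  have hne1 : n ≠ 1 := by omega
  have h0 : Saux a 0 n = 0 := by simp [Saux, hne1]
  have hagree : ∀ m : ℕ, Q.eval (m:ℂ) = R.eval (m:ℂ) := by
    intro m
    rw [hQ, hR, mul_comm y, key_ind α hα y m n (by omega)]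
    have hins : Finset.range (N+1) = insert 0 (Finset.Icc 1 N) := by
      ext i
      simp only [Finset.mem_range, Finset.mem_Icc, Finset.mem_insert]
      omega
    rw [hins, Finset.sum_insert (by simp), h0, mul_zero, zero_add]
    exact Finset.sum_congr rfl fun k hk => by rw [genBinom_nat]
  have hQR : Q = R := by
    have hsub : Set.range (Nat.cast : ℕ → ℂ) ⊆ {z : ℂ | (Q - R).IsRoot z} := by
      rintro z ⟨m, rfl⟩
      simp [Polynomial.IsRoot, hagree m]
    have hinf : Set.Infinite {z : ℂ | (Q - R).IsRoot z} :=
      (Set.infinite_range_of_injective Nat.cast_injective).mono hsub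
    have := Polynomial.eq_zero_of_infinite_isRoot _ hinf
    exact sub_eq_zero.mp this
  have hfin := congrArg (Polynomial.eval (x / y)) hQR
  rw [hQ, hR, mul_comm y, div_mul_cancel₀ x hy] at hfin
  rw [hfin]
  exact Finset.sum_congr rfl fun k hk => by
    rw [tps_eq_Saux a k n (by omega)]

theorem stmt_2 (α : ℕ → Polynomial ℂ) (hα : IsDirichletConvPolyFamily α)
    (n : ℕ) (hn : 2 ≤ n) (x y : ℂ) (hy : y ≠ 0) :
    (α n).eval x = ∑ k ∈ Finset.Icc 1 (ArithmeticFunction.cardFactors n),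
      genBinom (x / y) k * tupleProdSum (fun d => (α d).eval y) n k :=
  stmt_2' α hα n hn x y hy
end

section
/- Let f(s) = ∑_{n≥2} c_n n^{−s} be a Dirichlet series with complex coefficients and zero constant term that converges absolutely in some half-plane, fix w ∈ ℂ, and let g be the unique Dirichlet series with zero constant term, absolutely convergent in some half-plane, satisfying f(s − w·g(s)) = g(s) for all Re(s) sufficiently large. Then f and g also satisfy the functional equation g(s + w·f(s)) = f(s) for all s with Re(s) sufficiently large. -/
/-- The Dirichlet series `∑_{n} c n · n^{-s}` (as a `tsum`). -/
noncomputable def DSeries (c : ℕ → ℂ) (s : ℂ) : ℂ :=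
  ∑' n : ℕ, c n * (n : ℂ) ^ (-s)

/-- `c` is the coefficient sequence of a Dirichlet series with zero constant term that
converges absolutely in some half-plane. -/
def IsD0 (c : ℕ → ℂ) : Prop :=
  c 0 = 0 ∧ c 1 = 0 ∧
    ∃ θ : ℝ, ∀ s : ℂ, θ < s.re → Summable fun n : ℕ => ‖c n * (n : ℂ) ^ (-s)‖

lemma term_eq (c : ℕ → ℂ) (h0 : c 0 = 0) (s : ℂ) (n : ℕ) :
    LSeries.term c s n = c n * (n : ℂ) ^ (-s) := by
  rcases eq_or_ne n 0 with rfl | hn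
  · simp [LSeries.term_zero, h0]
  · rw [LSeries.term_of_ne_zero hn, Complex.cpow_neg, div_eq_mul_inv]

lemma DSeries_eq (c : ℕ → ℂ) (h0 : c 0 = 0) (s : ℂ) : DSeries c s = LSeries c s := by
  unfold DSeries LSeries
  exact tsum_congr fun n => (term_eq c h0 s n).symm

lemma absc_le (c : ℕ → ℂ) (h0 : c 0 = 0) {θ : ℝ}
    (h : ∀ s : ℂ, θ < s.re → Summable fun n : ℕ => ‖c n * (n : ℂ) ^ (-s)‖) :
    LSeries.abscissaOfAbsConv c ≤ (θ : EReal) := by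
  refine LSeries.abscissaOfAbsConv_le_of_forall_lt_LSeriesSummable fun y hy => ?_
  have := h y (by simpa using hy)
  refine Summable.of_norm ?_
  simpa only [term_eq c h0] using this

lemma decay (c : ℕ → ℂ) (hc : IsD0 c) {ε : ℝ} (hε : 0 < ε) :
    ∃ M : ℝ, ∀ s : ℂ, M < s.re → ‖DSeries c s‖ < ε := by
  obtain ⟨h0, h1, θ, hθ⟩ := hc
  have hσ0 : θ < θ + 1 := by linarith
  set σ0 : ℝ := θ + 1
  have hsum : Summable fun n : ℕ => ‖c n * (n : ℂ) ^ (-(σ0 : ℂ))‖ := hθ σ0 (by simpa using hσ0)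
  have key : ∀ s : ℂ, σ0 ≤ s.re →
      ‖DSeries c s‖ ≤ (2 : ℝ) ^ (σ0 - s.re) * ∑' n : ℕ, ‖c n * (n : ℂ) ^ (-(σ0 : ℂ))‖ := by
    intro s hs
    have hsums : Summable fun n : ℕ => ‖c n * (n : ℂ) ^ (-s)‖ := hθ s (by linarith)
    have h1' : ‖DSeries c s‖ ≤ ∑' n : ℕ, ‖c n * (n : ℂ) ^ (-s)‖ :=
      norm_tsum_le_tsum_norm hsums
    have h2' : (∑' n : ℕ, ‖c n * (n : ℂ) ^ (-s)‖)
        ≤ ∑' n : ℕ, (2 : ℝ) ^ (σ0 - s.re) * ‖c n * (n : ℂ) ^ (-(σ0 : ℂ))‖ := by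
      refine Summable.tsum_le_tsum (fun n => ?_) hsums (hsum.mul_left _)
      match n with
      | 0 => simp [h0]
      | 1 => simp [h1]
      | (m + 2) =>
        have hn2 : (2 : ℝ) ≤ ((m + 2 : ℕ) : ℝ) := by exact_mod_cast Nat.le_add_left 2 m
        have hnpos : (0 : ℝ) < ((m + 2 : ℕ) : ℝ) := by linarith
        have e1 : ‖c (m + 2) * ((m + 2 : ℕ) : ℂ) ^ (-s)‖
            = ‖c (m + 2)‖ * ((m + 2 : ℕ) : ℝ) ^ (-s.re) := by
          rw [norm_mul, Complex.norm_natCast_cpow_of_pos (by omega)]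
          simp
        have e2 : ‖c (m + 2) * ((m + 2 : ℕ) : ℂ) ^ (-(σ0 : ℂ))‖
            = ‖c (m + 2)‖ * ((m + 2 : ℕ) : ℝ) ^ (-σ0) := by
          rw [norm_mul, Complex.norm_natCast_cpow_of_pos (by omega)]
          simp
        rw [e1, e2]
        have e3 : ((m + 2 : ℕ) : ℝ) ^ (-s.re)
            = ((m + 2 : ℕ) : ℝ) ^ (σ0 - s.re) * ((m + 2 : ℕ) : ℝ) ^ (-σ0) := by
          rw [← Real.rpow_add hnpos]; ring_nf
        have e4 : ((m + 2 : ℕ) : ℝ) ^ (σ0 - s.re) ≤ (2 : ℝ) ^ (σ0 - s.re) :=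
          Real.rpow_le_rpow_of_nonpos zero_lt_two hn2 (by linarith)
        calc ‖c (m + 2)‖ * ((m + 2 : ℕ) : ℝ) ^ (-s.re)
            = ((m + 2 : ℕ) : ℝ) ^ (σ0 - s.re) * (‖c (m + 2)‖ * ((m + 2 : ℕ) : ℝ) ^ (-σ0)) := by
              rw [e3]; ring
          _ ≤ (2 : ℝ) ^ (σ0 - s.re) * (‖c (m + 2)‖ * ((m + 2 : ℕ) : ℝ) ^ (-σ0)) := by
              refine mul_le_mul_of_nonneg_right e4 (by positivity)
    rw [tsum_mul_left] at h2'
    exact h1'.trans h2'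
  have htend : Filter.Tendsto
      (fun x : ℝ => (2 : ℝ) ^ (σ0 - x) * ∑' n : ℕ, ‖c n * (n : ℂ) ^ (-(σ0 : ℂ))‖)
      Filter.atTop (nhds 0) := by
    have hb1 : Filter.Tendsto (fun x : ℝ => σ0 + -x) Filter.atTop Filter.atBot :=
      Filter.tendsto_atBot_add_const_left _ σ0 Filter.tendsto_neg_atTop_atBot
    have hb2 : Filter.Tendsto (fun x : ℝ => Real.log 2 * (σ0 + -x)) Filter.atTop Filter.atBot :=
      hb1.const_mul_atBot (Real.log_pos one_lt_two)
    have h3 : Filter.Tendsto (fun x : ℝ => (2 : ℝ) ^ (σ0 - x)) Filter.atTop (nhds 0) := by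
      simp only [Real.rpow_def_of_pos zero_lt_two, sub_eq_add_neg]
      exact Real.tendsto_exp_atBot.comp hb2
    simpa using h3.mul_const _
  have hev : ∀ᶠ x : ℝ in Filter.atTop,
      ((2 : ℝ) ^ (σ0 - x) * ∑' n : ℕ, ‖c n * (n : ℂ) ^ (-(σ0 : ℂ))‖) < ε ∧ σ0 ≤ x :=
    (htend.eventually_lt_const hε).and (Filter.eventually_ge_atTop σ0)
  obtain ⟨M, hM⟩ := Filter.eventually_atTop.mp hev
  refine ⟨M, fun s hs => ?_⟩
  obtain ⟨hlt, hge⟩ := hM s.re hs.le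
  exact lt_of_le_of_lt (key s hge) hlt

theorem stmt_17 (c : ℕ → ℂ) (hc : IsD0 c) (w : ℂ)
    (b : ℕ → ℂ) (hb : IsD0 b)
    (hfg : ∃ θ : ℝ, ∀ s : ℂ, θ < s.re →
      DSeries c (s - w * DSeries b s) = DSeries b s) :
    ∃ θ : ℝ, ∀ s : ℂ, θ < s.re →
      DSeries b (s + w * DSeries c s) = DSeries c s := by
  obtain ⟨θ₀, hfg⟩ := hfg
  have hεw : (0 : ℝ) < 1 / (‖w‖ + 1) := by positivity
  obtain ⟨Mc, hMc⟩ := decay c hc hεw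
  obtain ⟨Mb, hMb⟩ := decay b hb hεw
  obtain ⟨hc0, hc1, θc, hθc⟩ := hc
  obtain ⟨hb0, hb1, θb, hθb⟩ := hb
  have hcL : ∀ s : ℂ, DSeries c s = LSeries c s := DSeries_eq c hc0
  have hbL : ∀ s : ℂ, DSeries b s = LSeries b s := DSeries_eq b hb0
  have hac : LSeries.abscissaOfAbsConv c ≤ (θc : EReal) := absc_le c hc0 hθc
  have hab : LSeries.abscissaOfAbsConv b ≤ (θb : EReal) := absc_le b hb0 hθb
  have hre_bound : ∀ z : ℂ, -‖z‖ ≤ z.re ∧ z.re ≤ ‖z‖ := fun z =>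
    abs_le.mp (Complex.abs_re_le_norm z)
  have hwc : ∀ s : ℂ, Mc < s.re → ‖w * LSeries c s‖ < 1 := by
    intro s hs
    rw [← hcL, norm_mul]
    calc ‖w‖ * ‖DSeries c s‖ ≤ ‖w‖ * (1 / (‖w‖ + 1)) :=
          mul_le_mul_of_nonneg_left (hMc s hs).le (norm_nonneg w)
      _ < 1 := by
          rw [mul_one_div, div_lt_one (by positivity)]
          linarith
  have hwb : ∀ s : ℂ, Mb < s.re → ‖w * LSeries b s‖ < 1 := by
    intro s hs
    rw [← hbL, norm_mul]
    calc ‖w‖ * ‖DSeries b s‖ ≤ ‖w‖ * (1 / (‖w‖ + 1)) :=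
          mul_le_mul_of_nonneg_left (hMb s hs).le (norm_nonneg w)
      _ < 1 := by
          rw [mul_one_div, div_lt_one (by positivity)]
          linarith
  set M : ℝ := max (max (θc + 2) (θb + 2)) (max (θ₀ + 2) (max (Mc + 1) (Mb + 1))) with hMdef
  have hM1 : θc + 2 ≤ M := (le_max_left _ _).trans (le_max_left _ _)
  have hM2 : θb + 2 ≤ M := (le_max_right _ _).trans (le_max_left _ _)
  have hM3 : θ₀ + 2 ≤ M := (le_max_left _ _).trans (le_max_right _ _)
  have hM4 : Mc + 1 ≤ M := ((le_max_left _ _).trans (le_max_right _ _)).trans (le_max_right _ _)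
  have hM5 : Mb + 1 ≤ M := ((le_max_right _ _).trans (le_max_right _ _)).trans (le_max_right _ _)
  set U : Set ℂ := {s : ℂ | M < s.re} with hUdef
  set V : Set ℂ := {s : ℂ | M + 1 < s.re} with hVdef
  have hUopen : IsOpen U := isOpen_lt continuous_const Complex.continuous_re
  have hVopen : IsOpen V := isOpen_lt continuous_const Complex.continuous_re
  have hUpre : IsPreconnected U := (convex_halfSpace_re_gt M).isPreconnected
  have hVpre : IsPreconnected V := (convex_halfSpace_re_gt (M + 1)).isPreconnected
  -- analyticity of the relevant functions
  have hanc : AnalyticOnNhd ℂ (LSeries c) {s : ℂ | θc < s.re} :=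
    (LSeries_analyticOnNhd c).mono fun s hs =>
      lt_of_le_of_lt hac (by exact_mod_cast EReal.coe_lt_coe_iff.mpr hs)
  have hanb : AnalyticOnNhd ℂ (LSeries b) {s : ℂ | θb < s.re} :=
    (LSeries_analyticOnNhd b).mono fun s hs =>
      lt_of_le_of_lt hab (by exact_mod_cast EReal.coe_lt_coe_iff.mpr hs)
  have hfU : AnalyticOnNhd ℂ (LSeries c) U :=
    hanc.mono fun s hs => by simp only [hUdef, Set.mem_setOf_eq] at hs; simp only [Set.mem_setOf_eq]; linarith
  have hτana : AnalyticOnNhd ℂ (fun s => s + w * LSeries c s) U :=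
    (analyticOnNhd_id).add (analyticOnNhd_const.mul hfU)
  have hτre : ∀ s ∈ U, M - 1 < (s + w * LSeries c s).re := by
    intro s hs
    simp only [hUdef, Set.mem_setOf_eq] at hs
    have h1 : ‖w * LSeries c s‖ < 1 := hwc s (by linarith)
    have h2 := (hre_bound (w * LSeries c s)).1
    rw [Complex.add_re]
    linarith
  have hgτ : AnalyticOnNhd ℂ (fun s => LSeries b (s + w * LSeries c s)) U := by
    refine hanb.comp hτana ?_
    intro s hs
    have := hτre s hs
    simp only [Set.mem_setOf_eq]
    linarith
  have hσana : AnalyticOnNhd ℂ (fun s => s - w * LSeries b s) V :=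
    (analyticOnNhd_id).sub (analyticOnNhd_const.mul
      (hanb.mono fun s hs => by simp only [hVdef, Set.mem_setOf_eq] at *; linarith))
  -- the key identity on σ(V)
  have key : ∀ s ∈ V, (s - w * LSeries b s) ∈ U ∧
      LSeries b ((s - w * LSeries b s) + w * LSeries c (s - w * LSeries b s))
        = LSeries c (s - w * LSeries b s) := by
    intro s hs
    simp only [hVdef, Set.mem_setOf_eq] at hs
    have h1 : ‖w * LSeries b s‖ < 1 := hwb s (by linarith)
    have h4 : (w * LSeries b s).re < 1 := by
      have := (hre_bound (w * LSeries b s)).2; linarith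
    have hmem : (s - w * LSeries b s) ∈ U := by
      simp only [hUdef, Set.mem_setOf_eq, Complex.sub_re]
      linarith
    have heq : LSeries c (s - w * LSeries b s) = LSeries b s := by
      have := hfg s (by linarith)
      simpa only [hcL, hbL] using this
    refine ⟨hmem, ?_⟩
    rw [heq]
    have : s - w * LSeries b s + w * LSeries b s = s := by ring
    rw [this]
  -- σ is nonconstant on V, hence an open map
  have hs1V : ((M + 2 : ℝ) : ℂ) ∈ V := by
    simp only [hVdef, Set.mem_setOf_eq, Complex.ofReal_re]; linarith
  have hs2V : ((M + 6 : ℝ) : ℂ) ∈ V := by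
    simp only [hVdef, Set.mem_setOf_eq, Complex.ofReal_re]; linarith
  have hnonconst : ¬ ∃ k : ℂ, ∀ z ∈ V, z - w * LSeries b z = k := by
    rintro ⟨k, hk⟩
    have e1 := hk _ hs1V
    have e2 := hk _ hs2V
    have h1 : ‖w * LSeries b ((M + 2 : ℝ) : ℂ)‖ < 1 := by
      refine hwb _ ?_; rw [Complex.ofReal_re]; linarith
    have h2 : ‖w * LSeries b ((M + 6 : ℝ) : ℂ)‖ < 1 := by
      refine hwb _ ?_; rw [Complex.ofReal_re]; linarith
    have hdiff : ((M + 2 : ℝ) : ℂ) - ((M + 6 : ℝ) : ℂ)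
        = w * LSeries b ((M + 2 : ℝ) : ℂ) - w * LSeries b ((M + 6 : ℝ) : ℂ) := by
      have := e1.trans e2.symm
      linear_combination this
    have hn1 : ‖((M + 2 : ℝ) : ℂ) - ((M + 6 : ℝ) : ℂ)‖ = 4 := by
      rw [← Complex.ofReal_sub]
      norm_num
    have hn2 : ‖w * LSeries b ((M + 2 : ℝ) : ℂ) - w * LSeries b ((M + 6 : ℝ) : ℂ)‖ < 2 := by
      calc ‖w * LSeries b ((M + 2 : ℝ) : ℂ) - w * LSeries b ((M + 6 : ℝ) : ℂ)‖
          ≤ ‖w * LSeries b ((M + 2 : ℝ) : ℂ)‖ + ‖w * LSeries b ((M + 6 : ℝ) : ℂ)‖ :=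
            norm_sub_le _ _
        _ < 2 := by linarith
    rw [hdiff] at hn1
    linarith
  have himg : IsOpen ((fun s => s - w * LSeries b s) '' V) := by
    rcases hσana.is_constant_or_isOpen hVpre with ⟨k, hk⟩ | hopen
    · exact absurd ⟨k, hk⟩ hnonconst
    · exact hopen V subset_rfl hVopen
  -- identity theorem
  set z : ℂ := ((M + 2 : ℝ) : ℂ) - w * LSeries b ((M + 2 : ℝ) : ℂ) with hzdef
  have hzimg : z ∈ (fun s => s - w * LSeries b s) '' V := ⟨_, hs1V, rfl⟩
  have hzU : z ∈ U := (key _ hs1V).1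
  have hev : (fun s => LSeries b (s + w * LSeries c s)) =ᶠ[nhds z] LSeries c := by
    filter_upwards [himg.mem_nhds hzimg] with u hu
    obtain ⟨s, hsV, rfl⟩ := hu
    exact (key s hsV).2
  have hEq : Set.EqOn (fun s => LSeries b (s + w * LSeries c s)) (LSeries c) U :=
    hgτ.eqOn_of_preconnected_of_eventuallyEq hfU hUpre hzU hev
  refine ⟨M, fun s hs => ?_⟩
  have := hEq (show s ∈ U from hs)
  simpa only [hcL, hbL] using this
end
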